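/- Let G be a graph with conservative weight function w, s,t ∈ V, and let H be the doubled graph of G (with copies G', zero-weight connector edges vv', and vertices s', t' deleted), where additionally a set F_even of edges is deleted from the G-side and the copies of a disjoint set F_odd are deleted from the G'-side, with F_even ∪ F_odd containing all negative-weight edges. Then every perfect matching M of H yields an odd (s,t)-path Q in G with w(Q) ≤ w(M), such that every edge of Q in F_even has even sequence number and every edge of Q in F_odd has odd sequence number. -/

import Mathlib

open SimpleGraph

/-- The total weight of a walk, counting edges with multiplicity. -/
def walkWeight {V : Type*} (G : SimpleGraph V) (w : Sym2 V → ℝ) {u v : V}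
    (p : G.Walk u v) : ℝ :=
  (p.edges.map w).sum

/-- A weight function is conservative if every cycle has non-negative total weight. -/
def Conservative {V : Type*} (G : SimpleGraph V) (w : Sym2 V → ℝ) : Prop :=
  ∀ (v : V) (c : G.Walk v v), c.IsCycle → 0 ≤ walkWeight G w c

/-- Vertex type of the doubled graph: the original vertices (`inl`) together with the
copies `v'` of all vertices other than `s` and `t` (the copies `s'`, `t'` are deleted). -/
def Vd (V : Type*) (s t : V) : Type _ := V ⊕ {u : V // u ≠ s ∧ u ≠ t}

/-- Projection of the doubled graph's vertices back to `V`. -/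
def projd {V : Type*} (s t : V) : Vd V s t → V := Sum.elim id Subtype.val

/-- The doubled graph `H` for the parity-constrained problem: `G` minus `F_even`,
a disjoint copy of `G` minus the copies of `F_odd` (with `s'`, `t'` deleted), and a
connector edge `v v'` for every vertex `v ∉ {s,t}`. -/
def doubledC {V : Type*} (G : SimpleGraph V) (s t : V)
    (Feven Fodd : Set (Sym2 V)) : SimpleGraph (Vd V s t) where
  Adj x y :=
    match x, y with
    | Sum.inl u, Sum.inl v => G.Adj u v ∧ s(u, v) ∉ Feven
    | Sum.inr u, Sum.inr v => G.Adj u.val v.val ∧ s(u.val, v.val) ∉ Fodd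
    | Sum.inl u, Sum.inr v => u = v.val
    | Sum.inr u, Sum.inl v => u.val = v
  symm := by
    refine ⟨?_⟩
    rintro (u | u) (v | v) h
    · exact ⟨h.1.symm, by rw [Sym2.eq_swap]; exact h.2⟩
    · exact h.symm
    · exact h.symm
    · exact ⟨h.1.symm, by rw [Sym2.eq_swap]; exact h.2⟩
  loopless := by
    refine ⟨?_⟩
    rintro (u | u) h
    · exact G.loopless.irrefl u h.1
    · exact G.loopless.irrefl u.val h.1

/-- Weights on the doubled graph: copies inherit original weights, connector edges get
weight `0`. -/
def doubledWeight {V : Type*} [DecidableEq V] (w : Sym2 V → ℝ) (s t : V)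
    (e : Sym2 (Vd V s t)) : ℝ :=
  if (e.map (projd s t)).IsDiag then 0 else w (e.map (projd s t))

attribute [reducible] Vd

namespace PCPaux

open Sum Finset

set_option linter.unusedSectionVars false

variable {V : Type*} [Fintype V] [DecidableEq V] {G : SimpleGraph V} {w : Sym2 V → ℝ}
  {s t : V} {Feven Fodd : Set (Sym2 V)} {M : Set (Sym2 (Vd V s t))}

instance : DecidableEq (Vd V s t) := inferInstanceAs (DecidableEq (_ ⊕ _))
instance : Fintype (Vd V s t) := inferInstanceAs (Fintype (_ ⊕ _))

lemma proj_inl (v : V) : projd s t (Sum.inl v) = v := rfl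
lemma proj_inr (u : {u : V // u ≠ s ∧ u ≠ t}) : projd s t (Sum.inr u) = u.val := rfl

lemma proj_eq_iff (x : Vd V s t) (v : V) :
    projd s t x = v ↔ x = Sum.inl v ∨ ∃ h : v ≠ s ∧ v ≠ t, x = Sum.inr ⟨v, h⟩ := by
  cases x with
  | inl u =>
    simp only [proj_inl]
    constructor
    · rintro rfl; exact Or.inl rfl
    · rintro (h | ⟨h1, h2⟩)
      · exact Sum.inl.inj h
      · exact absurd h2 (by simp)
  | inr u =>
    simp only [proj_inr]
    constructor
    · rintro rfl; exact Or.inr ⟨u.2, rfl⟩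
    · rintro (h | ⟨h1, h2⟩)
      · exact absurd h (by simp)
      · exact congrArg Subtype.val (Sum.inr.inj h2)

/-- the matching partner -/
noncomputable def mate (hp : ∀ v : Vd V s t, ∃! e, e ∈ M ∧ v ∈ e) (x : Vd V s t) :
    Vd V s t :=
  Sym2.Mem.other' (hp x).exists.choose_spec.2

lemma mate_mem (hp : ∀ v : Vd V s t, ∃! e, e ∈ M ∧ v ∈ e) (x : Vd V s t) :
    s(x, mate hp x) ∈ M := by
  have h := (hp x).exists.choose_spec
  have h2 := Sym2.other_spec' h.2
  show s(x, Sym2.Mem.other' (hp x).exists.choose_spec.2) ∈ M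
  rw [h2]
  exact h.1

section WithM
variable (hp : ∀ v : Vd V s t, ∃! e, e ∈ M ∧ v ∈ e)
  (hM : M ⊆ (doubledC G s t Feven Fodd).edgeSet)
include hp hM

lemma mate_ne (x : Vd V s t) : mate hp x ≠ x := by
  intro h
  have h1 := hM (mate_mem hp x)
  have h2 := SimpleGraph.not_isDiag_of_mem_edgeSet _ h1
  rw [h] at h2
  exact h2 (Sym2.mk_isDiag_iff.mpr rfl)

lemma mate_eq {x y : Vd V s t} (h : s(x, y) ∈ M) : mate hp x = y := by
  have h1 : s(x, mate hp x) ∈ M := mate_mem hp x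
  have h2 := (hp x).unique ⟨h1, Sym2.mem_mk_left _ _⟩ ⟨h, Sym2.mem_mk_left _ _⟩
  rcases Sym2.eq_iff.mp h2 with ⟨-, h3⟩ | ⟨h3, h4⟩
  · exact h3
  · exact absurd h4 (mate_ne hp hM x)

lemma mate_mate (x : Vd V s t) : mate hp (mate hp x) = x :=
  mate_eq hp hM (by rw [Sym2.eq_swap]; exact mate_mem hp x)

lemma mate_adj (x : Vd V s t) : (doubledC G s t Feven Fodd).Adj x (mate hp x) :=
  hM (mate_mem hp x)

lemma mate_inl (v : V) :
    (∃ u, mate hp (Sum.inl v) = Sum.inl u ∧ G.Adj v u ∧ s(v, u) ∉ Feven) ∨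
    (∃ h : v ≠ s ∧ v ≠ t, mate hp (Sum.inl v) = Sum.inr ⟨v, h⟩) := by
  have h := mate_adj hp hM (Sum.inl v)
  rcases hm : mate hp (Sum.inl v) with u | u
  · rw [hm] at h
    exact Or.inl ⟨u, rfl, h⟩
  · rw [hm] at h
    have hv : v = u.val := h
    exact Or.inr ⟨by rw [hv]; exact u.2, congrArg Sum.inr (Subtype.ext hv.symm)⟩

lemma mate_inr (u : {u : V // u ≠ s ∧ u ≠ t}) :
    (∃ u', mate hp (Sum.inr u) = Sum.inr u' ∧ G.Adj u.val u'.val ∧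
      s(u.val, u'.val) ∉ Fodd) ∨
    mate hp (Sum.inr u) = Sum.inl u.val := by
  have h := mate_adj hp hM (Sum.inr u)
  rcases hm : mate hp (Sum.inr u) with v | u'
  · rw [hm] at h
    have hv : u.val = v := h
    exact Or.inr (by rw [hv])
  · rw [hm] at h
    exact Or.inl ⟨u', rfl, h⟩

end WithM

lemma dW_inl (u v : V) (h : u ≠ v) :
    doubledWeight w s t s(Sum.inl u, Sum.inl v) = w s(u, v) := by
  unfold doubledWeight
  rw [Sym2.map_pair_eq]
  rw [if_neg]
  · rfl
  · exact fun hd => h (Sym2.mk_isDiag_iff.mp hd)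

lemma dW_inr (u v : {u : V // u ≠ s ∧ u ≠ t}) (h : u.val ≠ v.val) :
    doubledWeight w s t s(Sum.inr u, Sum.inr v) = w s(u.val, v.val) := by
  unfold doubledWeight
  rw [Sym2.map_pair_eq]
  rw [if_neg]
  · rfl
  · exact fun hd => h (Sym2.mk_isDiag_iff.mp hd)

lemma dW_conn (v : V) (u : {u : V // u ≠ s ∧ u ≠ t}) (h : v = u.val) :
    doubledWeight w s t s(Sum.inl v, Sum.inr u) = 0 := by
  unfold doubledWeight
  rw [Sym2.map_pair_eq, if_pos]
  exact Sym2.mk_isDiag_iff.mpr h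

lemma dW_conn' (v : V) (u : {u : V // u ≠ s ∧ u ≠ t}) (h : u.val = v) :
    doubledWeight w s t s(Sum.inr u, Sum.inl v) = 0 := by
  rw [Sym2.eq_swap]
  exact dW_conn v u h.symm

lemma walkWeight_nil {x : V} : walkWeight G w (SimpleGraph.Walk.nil : G.Walk x x) = 0 := rfl

lemma walkWeight_cons {x y z : V} (h : G.Adj x y) (p : G.Walk y z) :
    walkWeight G w (SimpleGraph.Walk.cons h p) = w s(x, y) + walkWeight G w p := by
  unfold walkWeight
  rw [SimpleGraph.Walk.edges_cons, List.map_cons, List.sum_cons]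

lemma filter_proj_nil :
    Finset.univ.filter (fun x : Vd V s t => projd s t x ∈ ([] : List V)) = ∅ := by
  ext x; simp

lemma filter_proj_cons (v : V) (hv : v ≠ s ∧ v ≠ t) (L : List V) (hvL : v ∉ L)
    (f : Vd V s t → ℝ) :
    ∑ x ∈ Finset.univ.filter (fun x : Vd V s t => projd s t x ∈ v :: L), f x
      = f (Sum.inl v) + f (Sum.inr ⟨v, hv⟩)
        + ∑ x ∈ Finset.univ.filter (fun x : Vd V s t => projd s t x ∈ L), f x := by
  have hset : Finset.univ.filter (fun x : Vd V s t => projd s t x ∈ v :: L)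
      = insert (Sum.inl v) (insert (Sum.inr ⟨v, hv⟩)
          (Finset.univ.filter (fun x : Vd V s t => projd s t x ∈ L))) := by
    ext x
    simp only [Finset.mem_filter, Finset.mem_univ, true_and, List.mem_cons, Finset.mem_insert]
    constructor
    · rintro (h | h)
      · rcases (proj_eq_iff x v).mp h with rfl | ⟨h1, rfl⟩
        · exact Or.inl rfl
        · exact Or.inr (Or.inl rfl)
      · exact Or.inr (Or.inr h)
    · rintro (rfl | rfl | h)
      · exact Or.inl rfl
      · exact Or.inl rfl
      · exact Or.inr h
  rw [hset, Finset.sum_insert, Finset.sum_insert, add_assoc]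
  · simp only [Finset.mem_filter, Finset.mem_univ, true_and, proj_inr]
    exact hvL
  · simp only [Finset.mem_insert, Finset.mem_filter, Finset.mem_univ, true_and, proj_inl]
    push_neg
    exact ⟨by simp, hvL⟩

lemma filter_proj_cons_st (v : V) (hv : ¬(v ≠ s ∧ v ≠ t)) (L : List V) (hvL : v ∉ L)
    (f : Vd V s t → ℝ) :
    ∑ x ∈ Finset.univ.filter (fun x : Vd V s t => projd s t x ∈ v :: L), f x
      = f (Sum.inl v)
        + ∑ x ∈ Finset.univ.filter (fun x : Vd V s t => projd s t x ∈ L), f x := by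
  have hset : Finset.univ.filter (fun x : Vd V s t => projd s t x ∈ v :: L)
      = insert (Sum.inl v)
          (Finset.univ.filter (fun x : Vd V s t => projd s t x ∈ L)) := by
    ext x
    simp only [Finset.mem_filter, Finset.mem_univ, true_and, List.mem_cons, Finset.mem_insert]
    constructor
    · rintro (h | h)
      · rcases (proj_eq_iff x v).mp h with rfl | ⟨h1, rfl⟩
        · exact Or.inl rfl
        · exact absurd h1 hv
      · exact Or.inr h
    · rintro (rfl | h)
      · exact Or.inl rfl
      · exact Or.inr h
  rw [hset, Finset.sum_insert]
  simp only [Finset.mem_filter, Finset.mem_univ, true_and, proj_inl]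
  exact hvL

section Main
variable (hp : ∀ v : Vd V s t, ∃! e, e ∈ M ∧ v ∈ e)
  (hM : M ⊆ (doubledC G s t Feven Fodd).edgeSet)

omit [Fintype V] in
lemma even_shift {j : ℕ} : Even (j + 2) ↔ Even j := by
  constructor
  · rintro ⟨k, hk⟩; exact ⟨k - 1, by omega⟩
  · rintro ⟨k, hk⟩; exact ⟨k + 1, by omega⟩

omit [Fintype V] in
lemma odd_shift {j : ℕ} : Odd (j + 2) ↔ Odd j := by
  constructor
  · rintro ⟨k, hk⟩; exact ⟨k - 1, by omega⟩
  · rintro ⟨k, hk⟩; exact ⟨k + 1, by omega⟩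

omit [Fintype V] [DecidableEq V] in
lemma parity_cons2 {x y z u : V} (hxy : G.Adj x y) (hyz : G.Adj y z) (W' : G.Walk z u)
    (h1 : s(x, y) ∉ Fodd) (h2 : s(y, z) ∉ Feven)
    (hW' : ∀ (i : ℕ) (hi : i < W'.edges.length),
      (Even i → W'.edges.get ⟨i, hi⟩ ∉ Fodd) ∧ (Odd i → W'.edges.get ⟨i, hi⟩ ∉ Feven)) :
    ∀ (i : ℕ) (hi : i < (SimpleGraph.Walk.cons hxy (SimpleGraph.Walk.cons hyz W')).edges.length),
      (Even i → (SimpleGraph.Walk.cons hxy (SimpleGraph.Walk.cons hyz W')).edges.get ⟨i, hi⟩ ∉ Fodd) ∧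
      (Odd i → (SimpleGraph.Walk.cons hxy (SimpleGraph.Walk.cons hyz W')).edges.get ⟨i, hi⟩ ∉ Feven) := by
  intro i hi
  rcases i with _ | i
  · exact ⟨fun _ => h1, fun h => absurd h (by simp [Nat.odd_iff])⟩
  rcases i with _ | i
  · exact ⟨fun h => absurd h (by simp [Nat.even_iff]), fun _ => h2⟩
  · have hj : i < W'.edges.length := by
      simp only [SimpleGraph.Walk.edges_cons, List.length_cons] at hi
      omega
    exact ⟨fun h => (hW' i hj).1 (even_shift.mp h), fun h => (hW' i hj).2 (odd_shift.mp h)⟩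


lemma length_one_walk {x y : V} (W : G.Walk x y) (h : W.length = 1) :
    walkWeight G w W = w s(x, y) ∧ W.edges.head? = some s(x, y) := by
  cases W with
  | nil => simp at h
  | cons h2 W2 =>
    cases W2 with
    | nil =>
      constructor
      · rw [walkWeight_cons, walkWeight_nil]; ring
      · simp
    | cons h3 W3 => simp [SimpleGraph.Walk.length_cons] at h

include hp hM

set_option maxHeartbeats 2000000 in
lemma go : ∀ (n : ℕ) (S : Finset V) (a p : V),
    (Finset.univ \ S).card ≤ n →
    s ∈ S → t ∉ S → a ∉ S → a ≠ t →
    (∀ x ∈ S, ∃ y, mate hp (Sum.inl x) = Sum.inl y ∧ (y ∈ S ∨ y = a)) →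
    (∀ u : {u : V // u ≠ s ∧ u ≠ t}, u.val ∈ S →
      ∃ v' : {u : V // u ≠ s ∧ u ≠ t}, v'.val ∈ S ∧ mate hp (Sum.inr u) = Sum.inr v') →
    p ∈ S → mate hp (Sum.inl a) = Sum.inl p →
    ∃ W : G.Walk a t, W.IsPath ∧ Even W.length ∧
      (∀ x ∈ W.support, x ∉ S) ∧
      (∀ (i : ℕ) (hi : i < W.edges.length),
        (Even i → W.edges.get ⟨i, hi⟩ ∉ Fodd) ∧ (Odd i → W.edges.get ⟨i, hi⟩ ∉ Feven)) ∧
      (∀ x : Vd V s t, projd s t x ∈ W.support → x ≠ Sum.inl a →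
        projd s t (mate hp x) ∈ W.support) ∧
      ∑ x ∈ Finset.univ.filter (fun x : Vd V s t => projd s t x ∈ W.support),
          doubledWeight w s t s(x, mate hp x)
        = doubledWeight w s t s(Sum.inl a, mate hp (Sum.inl a)) + 2 * walkWeight G w W := by
  intro n
  induction n with
  | zero =>
    intro S a p hcard hsS htS haS hat _ _ _ _
    exfalso
    have h1 : a ∈ Finset.univ \ S := Finset.mem_sdiff.mpr ⟨Finset.mem_univ a, haS⟩
    have h2 := Finset.card_pos.mpr ⟨a, h1⟩
    omega
  | succ n ih =>
    intro S a p hcard hsS htS haS hat hinv1 hinv2 hpS hpa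
    have has : a ≠ s := fun h => haS (h ▸ hsS)
    have ha' : a ≠ s ∧ a ≠ t := ⟨has, hat⟩
    obtain ⟨b', hmb', hadjab, hFoab⟩ :
        ∃ b', mate hp (Sum.inr ⟨a, ha'⟩) = Sum.inr b' ∧ G.Adj a b'.val ∧
          s(a, b'.val) ∉ Fodd := by
      rcases mate_inr hp hM ⟨a, ha'⟩ with ⟨u', h1, h2, h3⟩ | hconn
      · exact ⟨u', h1, h2, h3⟩
      · exfalso
        have hem : s(Sum.inr ⟨a, ha'⟩, Sum.inl a) ∈ M := by
          have h0 := mate_mem hp (Sum.inr ⟨a, ha'⟩)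
          rwa [hconn] at h0
        have h1 : mate hp (Sum.inl a) = Sum.inr ⟨a, ha'⟩ :=
          mate_eq hp hM (by rw [Sym2.eq_swap]; exact hem)
        rw [hpa] at h1
        exact absurd h1 (by simp)
    have hmbback : mate hp (Sum.inr b') = Sum.inr ⟨a, ha'⟩ := by
      have h0 := mate_mate hp hM (Sum.inr ⟨a, ha'⟩)
      rwa [hmb'] at h0
    have hab : a ≠ b'.val := G.ne_of_adj hadjab
    have hbS : b'.val ∉ S := by
      intro hbS'
      obtain ⟨v', hv'S, hmv'⟩ := hinv2 b' hbS'
      rw [hmbback] at hmv'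
      have hva : v'.val = a := (congrArg Subtype.val (Sum.inr.inj hmv')).symm
      exact haS (hva ▸ hv'S)
    obtain ⟨c, hmc, hadjbc, hFebc⟩ :
        ∃ c, mate hp (Sum.inl b'.val) = Sum.inl c ∧ G.Adj b'.val c ∧
          s(b'.val, c) ∉ Feven := by
      rcases mate_inl hp hM b'.val with ⟨u, h1, h2, h3⟩ | ⟨hh, hconn⟩
      · exact ⟨u, h1, h2, h3⟩
      · exfalso
        have h0 := mate_mate hp hM (Sum.inl b'.val)
        rw [hconn] at h0
        have h1 : mate hp (Sum.inr b') = Sum.inl b'.val := h0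
        rw [hmbback] at h1
        exact absurd h1 (by simp)
    have hmcback : mate hp (Sum.inl c) = Sum.inl b'.val := by
      have h0 := mate_mate hp hM (Sum.inl b'.val)
      rwa [hmc] at h0
    have hbc : b'.val ≠ c := G.ne_of_adj hadjbc
    have hcS : c ∉ S := by
      intro hcS'
      obtain ⟨y, hmy, hyOr⟩ := hinv1 c hcS'
      rw [hmcback] at hmy
      have hyb : y = b'.val := (Sum.inl.inj hmy).symm
      rcases hyOr with h | h
      · exact hbS (hyb ▸ h)
      · exact hab (hyb ▸ h).symm
    have hca : c ≠ a := by
      intro h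
      rw [h, hpa] at hmcback
      exact hbS ((Sum.inl.inj hmcback) ▸ hpS)
    by_cases hct : c = t
    · -- base case : the walk a - b - t
      rw [hct] at hmc hadjbc hFebc hmcback hbc hca
      have hbt : b'.val ≠ t := hbc
      refine ⟨SimpleGraph.Walk.cons hadjab (SimpleGraph.Walk.cons hadjbc SimpleGraph.Walk.nil),
        ?_, ?_, ?_, ?_, ?_, ?_⟩
      · simp [SimpleGraph.Walk.cons_isPath_iff, hab, hat, hbt]
      · simp [SimpleGraph.Walk.length_cons]
      · intro x hx
        simp only [SimpleGraph.Walk.support_cons, SimpleGraph.Walk.support_nil,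
          List.mem_cons, List.not_mem_nil, or_false, List.mem_singleton] at hx
        rcases hx with rfl | rfl | rfl
        · exact haS
        · exact hbS
        · exact htS
      · exact parity_cons2 hadjab hadjbc SimpleGraph.Walk.nil hFoab hFebc
          (fun i hi => by simp at hi)
      · intro x hx hxa
        simp only [SimpleGraph.Walk.support_cons, SimpleGraph.Walk.support_nil,
          List.mem_cons, List.not_mem_nil, or_false, List.mem_singleton] at hx ⊢
        rcases hx with h | h | h
        · rcases (proj_eq_iff x a).mp h with rfl | ⟨h1, hx2⟩
          · exact absurd rfl hxa
          · have hx2' : x = Sum.inr ⟨a, ha'⟩ := hx2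
            subst hx2'
            rw [hmb']
            exact Or.inr (Or.inl rfl)
        · rcases (proj_eq_iff x b'.val).mp h with rfl | ⟨h1, hx2⟩
          · rw [hmc]
            exact Or.inr (Or.inr rfl)
          · have hx2' : x = Sum.inr b' := hx2
            subst hx2'
            rw [hmbback]
            exact Or.inl rfl
        · rcases (proj_eq_iff x t).mp h with rfl | ⟨h1, hx2⟩
          · rw [hmcback]
            exact Or.inr (Or.inl rfl)
          · exact absurd rfl h1.2
      · rw [SimpleGraph.Walk.support_cons, SimpleGraph.Walk.support_cons, SimpleGraph.Walk.support_nil]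
        rw [filter_proj_cons a ha' _ (by simp [hab, hat]),
          filter_proj_cons b'.val b'.2 _ (by simp [hbt]),
          filter_proj_cons_st t (by simp) _ (by simp), filter_proj_nil,
          Finset.sum_empty]
        have e2 : doubledWeight w s t s(Sum.inr ⟨a, ha'⟩, mate hp (Sum.inr ⟨a, ha'⟩))
            = w s(a, b'.val) := by rw [hmb', dW_inr _ _ hab]
        have e3 : doubledWeight w s t s(Sum.inl b'.val, mate hp (Sum.inl b'.val))
            = w s(b'.val, t) := by rw [hmc, dW_inl _ _ hbc]
        have e4 : doubledWeight w s t s(Sum.inr b', mate hp (Sum.inr b'))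
            = w s(a, b'.val) := by
          rw [hmbback, dW_inr _ _ (Ne.symm hab), Sym2.eq_swap]
        have e5 : doubledWeight w s t s(Sum.inl t, mate hp (Sum.inl t))
            = w s(b'.val, t) := by
          rw [hmcback, dW_inl _ _ (Ne.symm hbc), Sym2.eq_swap]
        rw [e2, e3, e4, e5, walkWeight_cons, walkWeight_cons, walkWeight_nil]
        ring
    · -- recursive case
      have hbt : b'.val ≠ t := b'.2.2
      set S' : Finset V := insert a (insert b'.val S) with hS'
      have hsS' : s ∈ S' := by simp [hS', hsS]
      have htS' : t ∉ S' := by simp [hS', htS, Ne.symm hat, Ne.symm hbt]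
      have hcS' : c ∉ S' := by simp [hS', hcS, hca, Ne.symm hbc]
      have hcard' : (Finset.univ \ S').card ≤ n := by
        have h1 : a ∈ Finset.univ \ S := Finset.mem_sdiff.mpr ⟨Finset.mem_univ a, haS⟩
        have h2 : Finset.univ \ S' ⊆ (Finset.univ \ S).erase a := by
          intro x hx
          simp only [Finset.mem_sdiff, Finset.mem_univ, true_and, Finset.mem_erase,
            hS', Finset.mem_insert, not_or] at hx ⊢
          exact ⟨hx.1, hx.2.2⟩
        have h3 := Finset.card_le_card h2
        rw [Finset.card_erase_of_mem h1] at h3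
        omega
      have hinv1' : ∀ x ∈ S', ∃ y, mate hp (Sum.inl x) = Sum.inl y ∧ (y ∈ S' ∨ y = c) := by
        intro x hx
        rcases Finset.mem_insert.mp hx with rfl | hx
        · exact ⟨p, hpa, Or.inl (by simp [hS', Finset.mem_insert_of_mem, hpS])⟩
        rcases Finset.mem_insert.mp hx with rfl | hx
        · exact ⟨c, hmc, Or.inr rfl⟩
        · obtain ⟨y, hy, hyOr⟩ := hinv1 x hx
          refine ⟨y, hy, Or.inl ?_⟩
          rcases hyOr with h | rfl
          · simp [hS', Finset.mem_insert_of_mem, h]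
          · simp [hS']
      have hinv2' : ∀ u : {u : V // u ≠ s ∧ u ≠ t}, u.val ∈ S' →
          ∃ v' : {u : V // u ≠ s ∧ u ≠ t}, v'.val ∈ S' ∧
            mate hp (Sum.inr u) = Sum.inr v' := by
        intro u hu
        rcases Finset.mem_insert.mp hu with hua | hu
        · have hu' : u = ⟨a, ha'⟩ := Subtype.ext hua
          subst hu'
          exact ⟨b', by simp [hS'], hmb'⟩
        rcases Finset.mem_insert.mp hu with hub | hu
        · have hu' : u = b' := Subtype.ext hub
          subst hu'
          exact ⟨⟨a, ha'⟩, by simp [hS'], hmbback⟩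
        · obtain ⟨v', hv'S, hmv'⟩ := hinv2 u hu
          exact ⟨v', by simp [hS', Finset.mem_insert_of_mem, hv'S], hmv'⟩
      obtain ⟨W', h1', h2', h3', h4', h5', h6'⟩ :=
        ih S' c b'.val hcard' hsS' htS' hcS' hct hinv1' hinv2' (by simp [hS']) hmcback
      have hbW' : b'.val ∉ W'.support := fun hmem => h3' _ hmem (by simp [hS'])
      have haW' : a ∉ W'.support := fun hmem => h3' _ hmem (by simp [hS'])
      refine ⟨SimpleGraph.Walk.cons hadjab (SimpleGraph.Walk.cons hadjbc W'),
        ?_, ?_, ?_, ?_, ?_, ?_⟩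
      · rw [SimpleGraph.Walk.cons_isPath_iff, SimpleGraph.Walk.cons_isPath_iff]
        refine ⟨⟨h1', hbW'⟩, ?_⟩
        simp only [SimpleGraph.Walk.support_cons, List.mem_cons, not_or]
        exact ⟨hab, haW'⟩
      · simp only [SimpleGraph.Walk.length_cons]
        obtain ⟨k, hk⟩ := h2'
        exact ⟨k + 1, by omega⟩
      · intro x hx
        simp only [SimpleGraph.Walk.support_cons, List.mem_cons] at hx
        rcases hx with rfl | rfl | hx
        · exact haS
        · exact hbS
        · exact fun hxS => h3' x hx (by simp [hS', Finset.mem_insert_of_mem, hxS])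
      · exact parity_cons2 hadjab hadjbc W' hFoab hFebc h4'
      · intro x hx hxa
        simp only [SimpleGraph.Walk.support_cons, List.mem_cons] at hx ⊢
        rcases hx with h | h | h
        · rcases (proj_eq_iff x a).mp h with rfl | ⟨h1, hx2⟩
          · exact absurd rfl hxa
          · have hx2' : x = Sum.inr ⟨a, ha'⟩ := hx2
            subst hx2'
            rw [hmb']
            exact Or.inr (Or.inl rfl)
        · rcases (proj_eq_iff x b'.val).mp h with rfl | ⟨h1, hx2⟩
          · rw [hmc]
            exact Or.inr (Or.inr (SimpleGraph.Walk.start_mem_support W'))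
          · have hx2' : x = Sum.inr b' := hx2
            subst hx2'
            rw [hmbback]
            exact Or.inl rfl
        · by_cases hxc : x = Sum.inl c
          · subst hxc
            rw [hmcback]
            exact Or.inr (Or.inl rfl)
          · exact Or.inr (Or.inr (h5' x h hxc))
      · rw [SimpleGraph.Walk.support_cons, SimpleGraph.Walk.support_cons]
        rw [filter_proj_cons a ha' _ (by simp [hab, haW']),
          filter_proj_cons b'.val b'.2 _ hbW', h6']
        have e2 : doubledWeight w s t s(Sum.inr ⟨a, ha'⟩, mate hp (Sum.inr ⟨a, ha'⟩))
            = w s(a, b'.val) := by rw [hmb', dW_inr _ _ hab]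
        have e3 : doubledWeight w s t s(Sum.inl b'.val, mate hp (Sum.inl b'.val))
            = w s(b'.val, c) := by rw [hmc, dW_inl _ _ hbc]
        have e4 : doubledWeight w s t s(Sum.inr b', mate hp (Sum.inr b'))
            = w s(a, b'.val) := by
          rw [hmbback, dW_inr _ _ (Ne.symm hab), Sym2.eq_swap]
        have e5 : doubledWeight w s t s(Sum.inl c, mate hp (Sum.inl c))
            = w s(b'.val, c) := by
          rw [hmcback, dW_inl _ _ (Ne.symm hbc), Sym2.eq_swap]
        rw [e2, e3, e4, e5, walkWeight_cons, walkWeight_cons]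
        ring

set_option maxHeartbeats 2000000 in
lemma cyc : ∀ (n : ℕ) (D : Finset V) (T : Finset (Vd V s t)) (v0 a p : V)
    (hv0' : v0 ≠ s ∧ v0 ≠ t) (ha' : a ≠ s ∧ a ≠ t),
    (Finset.univ \ D).card ≤ n →
    v0 ∈ D → a ∉ D →
    (∀ x ∈ T, mate hp x ∈ T) →
    (∀ (v : V) (hv : v ≠ s ∧ v ≠ t), Sum.inl v ∈ T ↔ Sum.inr ⟨v, hv⟩ ∈ T) →
    Sum.inl s ∉ T → Sum.inl t ∉ T →
    (∀ x ∈ D, Sum.inl x ∈ T) →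
    Sum.inl a ∈ T →
    (∀ x ∈ D, ∃ y, mate hp (Sum.inl x) = Sum.inl y ∧ (y ∈ D ∨ y = a)) →
    (∀ u : {u : V // u ≠ s ∧ u ≠ t}, u.val ∈ D → u.val ≠ v0 →
      ∃ v' : {u : V // u ≠ s ∧ u ≠ t}, v'.val ∈ D ∧ mate hp (Sum.inr u) = Sum.inr v') →
    p ∈ D → mate hp (Sum.inl a) = Sum.inl p →
    ∃ W : G.Walk a v0, W.IsPath ∧
      (∀ x ∈ W.support, x = v0 ∨ x ∉ D) ∧
      (∀ v ∈ W.support, (v ≠ s ∧ v ≠ t) ∧ Sum.inl v ∈ T) ∧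
      (∀ e, W.edges.head? = some e → e ∉ Fodd) ∧
      (∀ x : Vd V s t, projd s t x ∈ W.support → x ≠ Sum.inl a → x ≠ Sum.inl v0 →
        projd s t (mate hp x) ∈ W.support) ∧
      ∑ x ∈ Finset.univ.filter (fun x : Vd V s t => projd s t x ∈ W.support),
          doubledWeight w s t s(x, mate hp x)
        = doubledWeight w s t s(Sum.inl a, mate hp (Sum.inl a))
          + doubledWeight w s t s(Sum.inl v0, mate hp (Sum.inl v0))
          + 2 * walkWeight G w W := by
  intro n
  induction n with
  | zero =>
    intro D T v0 a p hv0' ha' hcard hv0D haD _ _ _ _ _ _ _ _ _ _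
    exfalso
    have h1 : a ∈ Finset.univ \ D := Finset.mem_sdiff.mpr ⟨Finset.mem_univ a, haD⟩
    have h2 := Finset.card_pos.mpr ⟨a, h1⟩
    omega
  | succ n ih =>
    intro D T v0 a p hv0' ha' hcard hv0D haD hTm hpc hsT htT hDT hinlaT hinv1 hinv2 hpD hpa
    have hav0 : a ≠ v0 := fun h => haD (h ▸ hv0D)
    obtain ⟨b', hmb', hadjab, hFoab⟩ :
        ∃ b', mate hp (Sum.inr ⟨a, ha'⟩) = Sum.inr b' ∧ G.Adj a b'.val ∧
          s(a, b'.val) ∉ Fodd := by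
      rcases mate_inr hp hM ⟨a, ha'⟩ with ⟨u', h1, h2, h3⟩ | hconn
      · exact ⟨u', h1, h2, h3⟩
      · exfalso
        have hem : s(Sum.inr ⟨a, ha'⟩, Sum.inl a) ∈ M := by
          have h0 := mate_mem hp (Sum.inr ⟨a, ha'⟩)
          rwa [hconn] at h0
        have h1 : mate hp (Sum.inl a) = Sum.inr ⟨a, ha'⟩ :=
          mate_eq hp hM (by rw [Sym2.eq_swap]; exact hem)
        rw [hpa] at h1
        exact absurd h1 (by simp)
    have hmbback : mate hp (Sum.inr b') = Sum.inr ⟨a, ha'⟩ := by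
      have h0 := mate_mate hp hM (Sum.inr ⟨a, ha'⟩)
      rwa [hmb'] at h0
    have hab : a ≠ b'.val := G.ne_of_adj hadjab
    -- T membership chain
    have hinraT : Sum.inr ⟨a, ha'⟩ ∈ T := (hpc a ha').mp hinlaT
    have hinrbT : Sum.inr b' ∈ T := by
      have := hTm _ hinraT
      rwa [hmb'] at this
    have hinlbT : Sum.inl b'.val ∈ T := (hpc b'.val b'.2).mpr hinrbT
    by_cases hbv0 : b'.val = v0
    · -- base case : the cycle closes with the primed edge a - v0
      have hb'eq : b' = ⟨v0, hv0'⟩ := Subtype.ext hbv0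
      have hmb'2 : mate hp (Sum.inr ⟨a, ha'⟩) = Sum.inr ⟨v0, hv0'⟩ := by
        rw [hmb', hb'eq]
      have hmbback2 : mate hp (Sum.inr ⟨v0, hv0'⟩) = Sum.inr ⟨a, ha'⟩ := by
        rw [← hb'eq]; exact hmbback
      have hadjav0 : G.Adj a v0 := hbv0 ▸ hadjab
      have hFoav0 : s(a, v0) ∉ Fodd := hbv0 ▸ hFoab
      refine ⟨SimpleGraph.Walk.cons hadjav0 SimpleGraph.Walk.nil, ?_, ?_, ?_, ?_, ?_, ?_⟩
      · simp [SimpleGraph.Walk.cons_isPath_iff, hav0]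
      · intro x hx
        simp only [SimpleGraph.Walk.support_cons, SimpleGraph.Walk.support_nil,
          List.mem_cons, List.not_mem_nil, or_false, List.mem_singleton] at hx
        rcases hx with rfl | rfl
        · exact Or.inr haD
        · exact Or.inl rfl
      · intro v hv
        simp only [SimpleGraph.Walk.support_cons, SimpleGraph.Walk.support_nil,
          List.mem_cons, List.not_mem_nil, or_false, List.mem_singleton] at hv
        rcases hv with rfl | rfl
        · exact ⟨ha', hinlaT⟩
        · exact ⟨hv0', hDT _ hv0D⟩
      · intro e he
        simp only [SimpleGraph.Walk.edges_cons, SimpleGraph.Walk.edges_nil,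
          List.head?_cons, Option.some.injEq] at he
        rw [← he]
        exact hFoav0
      · intro x hx hxa hxv0
        simp only [SimpleGraph.Walk.support_cons, SimpleGraph.Walk.support_nil,
          List.mem_cons, List.not_mem_nil, or_false, List.mem_singleton] at hx ⊢
        rcases hx with h | h
        · rcases (proj_eq_iff x a).mp h with rfl | ⟨h1, hx2⟩
          · exact absurd rfl hxa
          · have hx2' : x = Sum.inr ⟨a, ha'⟩ := hx2
            subst hx2'
            rw [hmb'2]
            exact Or.inr rfl
        · rcases (proj_eq_iff x v0).mp h with rfl | ⟨h1, hx2⟩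
          · exact absurd rfl hxv0
          · have hx2' : x = Sum.inr ⟨v0, hv0'⟩ := hx2
            subst hx2'
            rw [hmbback2]
            exact Or.inl rfl
      · rw [SimpleGraph.Walk.support_cons, SimpleGraph.Walk.support_nil]
        rw [filter_proj_cons a ha' _ (by simp [hav0]),
          filter_proj_cons v0 hv0' _ (by simp), filter_proj_nil, Finset.sum_empty]
        have e2 : doubledWeight w s t s(Sum.inr ⟨a, ha'⟩, mate hp (Sum.inr ⟨a, ha'⟩))
            = w s(a, v0) := by
          rw [hmb'2]; exact dW_inr _ _ hav0
        have e4 : doubledWeight w s t s(Sum.inr ⟨v0, hv0'⟩, mate hp (Sum.inr ⟨v0, hv0'⟩))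
            = w s(a, v0) := by
          rw [hmbback2]
          exact (dW_inr _ _ (Ne.symm hav0)).trans (congrArg w Sym2.eq_swap)
        rw [e2, e4, walkWeight_cons, walkWeight_nil]
        ring
    · -- recursive case : continue around the cycle
      have hbD : b'.val ∉ D := by
        intro hbD'
        obtain ⟨v', hv'D, hmv'⟩ := hinv2 b' hbD' hbv0
        rw [hmbback] at hmv'
        have hva : v'.val = a := (congrArg Subtype.val (Sum.inr.inj hmv')).symm
        exact haD (hva ▸ hv'D)
      obtain ⟨c, hmc, hadjbc, hFebc⟩ :
          ∃ c, mate hp (Sum.inl b'.val) = Sum.inl c ∧ G.Adj b'.val c ∧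
            s(b'.val, c) ∉ Feven := by
        rcases mate_inl hp hM b'.val with ⟨u, h1, h2, h3⟩ | ⟨hh, hconn⟩
        · exact ⟨u, h1, h2, h3⟩
        · exfalso
          have h0 := mate_mate hp hM (Sum.inl b'.val)
          rw [hconn] at h0
          have h1 : mate hp (Sum.inr b') = Sum.inl b'.val := h0
          rw [hmbback] at h1
          exact absurd h1 (by simp)
      have hmcback : mate hp (Sum.inl c) = Sum.inl b'.val := by
        have h0 := mate_mate hp hM (Sum.inl b'.val)
        rwa [hmc] at h0
      have hbc : b'.val ≠ c := G.ne_of_adj hadjbc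
      have hcD : c ∉ D := by
        intro hcD'
        obtain ⟨y, hmy, hyOr⟩ := hinv1 c hcD'
        rw [hmcback] at hmy
        have hyb : y = b'.val := (Sum.inl.inj hmy).symm
        rcases hyOr with h | h
        · exact hbD (hyb ▸ h)
        · exact hab (hyb ▸ h).symm
      have hca : c ≠ a := by
        intro h
        rw [h, hpa] at hmcback
        exact hbD ((Sum.inl.inj hmcback) ▸ hpD)
      have hcv0 : c ≠ v0 := fun h => hcD (h ▸ hv0D)
      have hinlcT : Sum.inl c ∈ T := by
        have := hTm _ hinlbT
        rwa [hmc] at this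
      have hc' : c ≠ s ∧ c ≠ t := by
        constructor
        · intro h; rw [h] at hinlcT; exact hsT hinlcT
        · intro h; rw [h] at hinlcT; exact htT hinlcT
      set D' : Finset V := insert a (insert b'.val D) with hD'
      have hv0D' : v0 ∈ D' := by simp [hD', Finset.mem_insert_of_mem, hv0D]
      have hcD' : c ∉ D' := by simp [hD', hcD, hca, Ne.symm hbc]
      have hcard' : (Finset.univ \ D').card ≤ n := by
        have h1 : a ∈ Finset.univ \ D := Finset.mem_sdiff.mpr ⟨Finset.mem_univ a, haD⟩
        have h2 : Finset.univ \ D' ⊆ (Finset.univ \ D).erase a := by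
          intro x hx
          simp only [Finset.mem_sdiff, Finset.mem_univ, true_and, Finset.mem_erase,
            hD', Finset.mem_insert, not_or] at hx ⊢
          exact ⟨hx.1, hx.2.2⟩
        have h3 := Finset.card_le_card h2
        rw [Finset.card_erase_of_mem h1] at h3
        omega
      have hDT' : ∀ x ∈ D', Sum.inl x ∈ T := by
        intro x hx
        rcases Finset.mem_insert.mp hx with rfl | hx
        · exact hinlaT
        rcases Finset.mem_insert.mp hx with rfl | hx
        · exact hinlbT
        · exact hDT x hx
      have hinv1' : ∀ x ∈ D', ∃ y, mate hp (Sum.inl x) = Sum.inl y ∧ (y ∈ D' ∨ y = c) := by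
        intro x hx
        rcases Finset.mem_insert.mp hx with rfl | hx
        · exact ⟨p, hpa, Or.inl (by simp [hD', Finset.mem_insert_of_mem, hpD])⟩
        rcases Finset.mem_insert.mp hx with rfl | hx
        · exact ⟨c, hmc, Or.inr rfl⟩
        · obtain ⟨y, hy, hyOr⟩ := hinv1 x hx
          refine ⟨y, hy, Or.inl ?_⟩
          rcases hyOr with h | rfl
          · simp [hD', Finset.mem_insert_of_mem, h]
          · simp [hD']
      have hinv2' : ∀ u : {u : V // u ≠ s ∧ u ≠ t}, u.val ∈ D' → u.val ≠ v0 →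
          ∃ v' : {u : V // u ≠ s ∧ u ≠ t}, v'.val ∈ D' ∧
            mate hp (Sum.inr u) = Sum.inr v' := by
        intro u hu huv0
        rcases Finset.mem_insert.mp hu with hua | hu
        · have hu' : u = ⟨a, ha'⟩ := Subtype.ext hua
          subst hu'
          exact ⟨b', by simp [hD'], hmb'⟩
        rcases Finset.mem_insert.mp hu with hub | hu
        · have hu' : u = b' := Subtype.ext hub
          subst hu'
          exact ⟨⟨a, ha'⟩, by simp [hD'], hmbback⟩
        · obtain ⟨v', hv'D, hmv'⟩ := hinv2 u hu huv0
          exact ⟨v', by simp [hD', Finset.mem_insert_of_mem, hv'D], hmv'⟩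
      obtain ⟨W', h1', h2', h3', h4', h5', h6'⟩ :=
        ih D' T v0 c b'.val hv0' hc' hcard' hv0D' hcD' hTm hpc hsT htT hDT' hinlcT
          hinv1' hinv2' (by simp [hD']) hmcback
      have hbW' : b'.val ∉ W'.support := by
        intro hmem
        rcases h2' _ hmem with h | h
        · exact hbv0 h
        · exact h (by simp [hD'])
      have haW' : a ∉ W'.support := by
        intro hmem
        rcases h2' _ hmem with h | h
        · exact hav0 h
        · exact h (by simp [hD'])
      refine ⟨SimpleGraph.Walk.cons hadjab (SimpleGraph.Walk.cons hadjbc W'),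
        ?_, ?_, ?_, ?_, ?_, ?_⟩
      · rw [SimpleGraph.Walk.cons_isPath_iff, SimpleGraph.Walk.cons_isPath_iff]
        refine ⟨⟨h1', hbW'⟩, ?_⟩
        simp only [SimpleGraph.Walk.support_cons, List.mem_cons, not_or]
        exact ⟨hab, haW'⟩
      · intro x hx
        simp only [SimpleGraph.Walk.support_cons, List.mem_cons] at hx
        rcases hx with rfl | rfl | hx
        · exact Or.inr haD
        · exact Or.inr hbD
        · rcases h2' x hx with h | h
          · exact Or.inl h
          · exact Or.inr fun hxD => h (by simp [hD', Finset.mem_insert_of_mem, hxD])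
      · intro v hv
        simp only [SimpleGraph.Walk.support_cons, List.mem_cons] at hv
        rcases hv with rfl | rfl | hv
        · exact ⟨ha', hinlaT⟩
        · exact ⟨b'.2, hinlbT⟩
        · exact h3' v hv
      · intro e he
        simp only [SimpleGraph.Walk.edges_cons, List.head?_cons, Option.some.injEq] at he
        rw [← he]
        exact hFoab
      · intro x hx hxa hxv0
        simp only [SimpleGraph.Walk.support_cons, List.mem_cons] at hx ⊢
        rcases hx with h | h | h
        · rcases (proj_eq_iff x a).mp h with rfl | ⟨h1, hx2⟩
          · exact absurd rfl hxa
          · have hx2' : x = Sum.inr ⟨a, ha'⟩ := hx2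
            subst hx2'
            rw [hmb']
            exact Or.inr (Or.inl rfl)
        · rcases (proj_eq_iff x b'.val).mp h with rfl | ⟨h1, hx2⟩
          · rw [hmc]
            exact Or.inr (Or.inr (SimpleGraph.Walk.start_mem_support W'))
          · have hx2' : x = Sum.inr b' := hx2
            subst hx2'
            rw [hmbback]
            exact Or.inl rfl
        · by_cases hxc : x = Sum.inl c
          · subst hxc
            rw [hmcback]
            exact Or.inr (Or.inl rfl)
          · exact Or.inr (Or.inr (h5' x h hxc hxv0))
      · rw [SimpleGraph.Walk.support_cons, SimpleGraph.Walk.support_cons]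
        rw [filter_proj_cons a ha' _ (by simp [hab, haW']),
          filter_proj_cons b'.val b'.2 _ hbW', h6']
        have e2 : doubledWeight w s t s(Sum.inr ⟨a, ha'⟩, mate hp (Sum.inr ⟨a, ha'⟩))
            = w s(a, b'.val) := by rw [hmb', dW_inr _ _ hab]
        have e3 : doubledWeight w s t s(Sum.inl b'.val, mate hp (Sum.inl b'.val))
            = w s(b'.val, c) := by rw [hmc, dW_inl _ _ hbc]
        have e4 : doubledWeight w s t s(Sum.inr b', mate hp (Sum.inr b'))
            = w s(a, b'.val) := by
          rw [hmbback, dW_inr _ _ (Ne.symm hab), Sym2.eq_swap]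
        have e5 : doubledWeight w s t s(Sum.inl c, mate hp (Sum.inl c))
            = w s(b'.val, c) := by
          rw [hmcback, dW_inl _ _ (Ne.symm hbc), Sym2.eq_swap]
        rw [e2, e3, e4, e5, walkWeight_cons, walkWeight_cons]
        ring

variable (hw : Conservative G w)
  (hneg : ∀ e ∈ G.edgeSet, w e < 0 → e ∈ Feven ∪ Fodd)
include hw hneg

set_option maxHeartbeats 2000000 in
lemma resid : ∀ (n : ℕ) (T : Finset (Vd V s t)),
    T.card ≤ n →
    (∀ x ∈ T, mate hp x ∈ T) →
    (∀ (v : V) (hv : v ≠ s ∧ v ≠ t), Sum.inl v ∈ T ↔ Sum.inr ⟨v, hv⟩ ∈ T) →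
    Sum.inl s ∉ T → Sum.inl t ∉ T →
    0 ≤ ∑ x ∈ T, doubledWeight w s t s(x, mate hp x) := by
  intro n
  induction n with
  | zero =>
    intro T hcard _ _ _ _
    rw [Finset.card_eq_zero.mp (Nat.le_zero.mp hcard)]
    simp
  | succ n ih =>
    intro T hcard hTm hpc hsT htT
    rcases Finset.eq_empty_or_nonempty T with rfl | ⟨x0, hx0⟩
    · simp
    obtain ⟨v, hv', hvT⟩ : ∃ (v : V) (_ : v ≠ s ∧ v ≠ t), Sum.inl v ∈ T := by
      rcases x0 with v | u
      · refine ⟨v, ⟨?_, ?_⟩, hx0⟩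
        · intro h; rw [h] at hx0; exact hsT hx0
        · intro h; rw [h] at hx0; exact htT hx0
      · exact ⟨u.val, u.2, (hpc u.val u.2).mpr hx0⟩
    rcases mate_inl hp hM v with ⟨v1, hmv1, hadj01, hFe01⟩ | ⟨hh, hconn⟩
    · -- the plain copy of v is matched along an edge of G : trace out a cycle
      have hmv1back : mate hp (Sum.inl v1) = Sum.inl v := by
        have h0 := mate_mate hp hM (Sum.inl v)
        rwa [hmv1] at h0
      have hv1T : Sum.inl v1 ∈ T := by
        have := hTm _ hvT
        rwa [hmv1] at this
      have hv1' : v1 ≠ s ∧ v1 ≠ t := by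
        constructor
        · intro h; rw [h] at hv1T; exact hsT hv1T
        · intro h; rw [h] at hv1T; exact htT hv1T
      have hvv1 : v ≠ v1 := G.ne_of_adj hadj01
      obtain ⟨W, hWpath, hWD, hWT, hWhead, hWcl, hWsum⟩ :=
        cyc hp hM ((Finset.univ \ {v}).card) {v} T v v1 v hv' hv1' le_rfl
          (Finset.mem_singleton_self v)
          (by simp [Ne.symm hvv1])
          hTm hpc hsT htT
          (fun x hx => by rw [Finset.mem_singleton.mp hx]; exact hvT)
          hv1T
          (fun x hx => by
            rw [Finset.mem_singleton.mp hx]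
            exact ⟨v1, hmv1, Or.inr rfl⟩)
          (fun u hu huv0 => absurd (Finset.mem_singleton.mp hu) huv0)
          (Finset.mem_singleton_self v) hmv1back
      -- the weight of the traced cycle is non-negative
      have hcyc : 0 ≤ w s(v, v1) + walkWeight G w W := by
        by_cases hlen : W.length = 1
        · obtain ⟨hww, hhead⟩ := length_one_walk W hlen
          have hFo : s(v1, v) ∉ Fodd := hWhead _ hhead
          have hnonneg : ¬ w s(v, v1) < 0 := by
            intro hlt
            rcases hneg _ (G.mem_edgeSet.mpr hadj01) hlt with hf | hf
            · exact hFe01 hf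
            · rw [Sym2.eq_swap] at hf
              exact hFo hf
          have hswap : w s(v1, v) = w s(v, v1) := congrArg w Sym2.eq_swap
          rw [hww, hswap]
          linarith [not_lt.mp hnonneg]
        · have hclosed : (SimpleGraph.Walk.cons hadj01 W).IsCycle := by
            rw [SimpleGraph.Walk.cons_isCycle_iff]
            refine ⟨hWpath, ?_⟩
            intro hmem
            cases W with
            | nil => simp at hmem
            | cons h2 W2 =>
              rw [SimpleGraph.Walk.edges_cons, List.mem_cons] at hmem
              rcases hmem with heq | hmem
              · rcases Sym2.eq_iff.mp heq with ⟨h3, h4⟩ | ⟨h3, h4⟩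
                · exact hvv1 h3
                · subst h3
                  rw [SimpleGraph.Walk.cons_isPath_iff] at hWpath
                  have hnil := SimpleGraph.Walk.isPath_iff_eq_nil.mp hWpath.1
                  exact hlen (by rw [hnil]; simp)
              · have hv1mem := SimpleGraph.Walk.snd_mem_support_of_mem_edges W2 hmem
                rw [SimpleGraph.Walk.cons_isPath_iff] at hWpath
                exact hWpath.2 hv1mem
          have h0 := hw v (SimpleGraph.Walk.cons hadj01 W) hclosed
          rw [walkWeight_cons] at h0
          exact h0
      set CH : Finset (Vd V s t) :=
        Finset.univ.filter (fun x : Vd V s t => projd s t x ∈ W.support) with hCH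
      have hv1W : v1 ∈ W.support := SimpleGraph.Walk.start_mem_support W
      have hvW : v ∈ W.support := SimpleGraph.Walk.end_mem_support W
      have hCHT : CH ⊆ T := by
        intro x hx
        rw [hCH, Finset.mem_filter] at hx
        rcases x with u | u
        · exact (hWT u hx.2).2
        · exact (hpc u.val u.2).mp ((hWT u.val hx.2).2)
      have hinlvCH : Sum.inl v ∈ CH := by
        rw [hCH, Finset.mem_filter]
        exact ⟨Finset.mem_univ _, hvW⟩
      have hCHm : ∀ y ∈ CH, mate hp y ∈ CH := by
        intro y hy
        rw [hCH, Finset.mem_filter] at hy ⊢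
        refine ⟨Finset.mem_univ _, ?_⟩
        by_cases hy1 : y = Sum.inl v1
        · subst hy1; rw [hmv1back]; exact hvW
        by_cases hy0 : y = Sum.inl v
        · subst hy0; rw [hmv1]; exact hv1W
        · exact hWcl y hy.2 hy1 hy0
      -- the sum over the cycle vertices
      have hCHsum : ∑ x ∈ CH, doubledWeight w s t s(x, mate hp x)
          = 2 * (w s(v, v1) + walkWeight G w W) := by
        rw [hCH, hWsum, hmv1back, hmv1, dW_inl _ _ (Ne.symm hvv1), dW_inl _ _ hvv1]
        have hswap : w s(v1, v) = w s(v, v1) := congrArg w Sym2.eq_swap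
        rw [hswap]
        ring
      -- the rest of T
      have hTCHm : ∀ x ∈ T \ CH, mate hp x ∈ T \ CH := by
        intro x hx
        rw [Finset.mem_sdiff] at hx ⊢
        refine ⟨hTm _ hx.1, ?_⟩
        intro hmate
        have := hCHm _ hmate
        rw [mate_mate hp hM] at this
        exact hx.2 this
      have hTCHpc : ∀ (u : V) (hu : u ≠ s ∧ u ≠ t),
          Sum.inl u ∈ T \ CH ↔ Sum.inr ⟨u, hu⟩ ∈ T \ CH := by
        intro u hu
        simp only [Finset.mem_sdiff, hCH, Finset.mem_filter, Finset.mem_univ, true_and,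
          proj_inl, proj_inr]
        rw [hpc u hu]
      have hcard' : (T \ CH).card ≤ n := by
        have hss : T \ CH ⊂ T := by
          rw [Finset.ssubset_iff_of_subset (Finset.sdiff_subset)]
          exact ⟨Sum.inl v, hvT, by simp [Finset.mem_sdiff, hinlvCH]⟩
        have := Finset.card_lt_card hss
        omega
      have hrest := ih (T \ CH) hcard' hTCHm hTCHpc
        (fun h => hsT (Finset.mem_sdiff.mp h).1)
        (fun h => htT (Finset.mem_sdiff.mp h).1)
      rw [← Finset.sum_sdiff hCHT, hCHsum]
      linarith
    · -- the plain copy of v is matched with its own primed copy : weight 0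
      have hconn' : mate hp (Sum.inl v) = Sum.inr ⟨v, hv'⟩ := hconn
      have hconnback : mate hp (Sum.inr ⟨v, hv'⟩) = Sum.inl v := by
        have h0 := mate_mate hp hM (Sum.inl v)
        rwa [hconn'] at h0
      have hinrT : Sum.inr ⟨v, hv'⟩ ∈ T := (hpc v hv').mp hvT
      set T' : Finset (Vd V s t) :=
        (T.erase (Sum.inl v)).erase (Sum.inr ⟨v, hv'⟩) with hT'
      have hmem1 : Sum.inr ⟨v, hv'⟩ ∈ T.erase (Sum.inl v) :=
        Finset.mem_erase.mpr ⟨by simp, hinrT⟩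
      have hsplit1 : insert (Sum.inr ⟨v, hv'⟩) T' = T.erase (Sum.inl v) :=
        Finset.insert_erase hmem1
      have hsplit2 : insert (Sum.inl v) (T.erase (Sum.inl v)) = T :=
        Finset.insert_erase hvT
      have hnotmem1 : Sum.inr ⟨v, hv'⟩ ∉ T' := Finset.notMem_erase _ _
      have hnotmem2 : Sum.inl v ∉ insert (Sum.inr ⟨v, hv'⟩) T' := by
        rw [hsplit1]
        exact Finset.notMem_erase _ _
      have hT'm : ∀ x ∈ T', mate hp x ∈ T' := by
        intro x hx
        have hxT : x ∈ T :=
          Finset.mem_of_mem_erase (Finset.mem_of_mem_erase hx)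
        have hmT := hTm _ hxT
        rw [hT', Finset.mem_erase, Finset.mem_erase]
        refine ⟨?_, ?_, hmT⟩
        · intro h
          have : x = Sum.inl v := by
            rw [← mate_mate hp hM x, h, hconnback]
          rw [this] at hx
          exact (Finset.notMem_erase _ _) (Finset.mem_of_mem_erase hx)
        · intro h
          have : x = Sum.inr ⟨v, hv'⟩ := by
            rw [← mate_mate hp hM x, h, hconn']
          rw [this] at hx
          exact hnotmem1 hx
      have hT'pc : ∀ (u : V) (hu : u ≠ s ∧ u ≠ t),
          Sum.inl u ∈ T' ↔ Sum.inr ⟨u, hu⟩ ∈ T' := by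
        intro u hu
        rw [hT', Finset.mem_erase, Finset.mem_erase, Finset.mem_erase, Finset.mem_erase]
        constructor
        · rintro ⟨h1, h2, h3⟩
          refine ⟨?_, by simp, (hpc u hu).mp h3⟩
          intro h
          have huv : u = v := congrArg Subtype.val (Sum.inr.inj h)
          exact h2 (by rw [huv])
        · rintro ⟨h1, h2, h3⟩
          refine ⟨by simp, ?_, (hpc u hu).mpr h3⟩
          intro h
          have huv : u = v := Sum.inl.inj h
          exact h1 (congrArg Sum.inr (Subtype.ext huv))
      have hcard' : T'.card ≤ n := by
        have h1 : T'.card ≤ (T.erase (Sum.inl v)).card := Finset.card_erase_le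
        have h2 := Finset.card_erase_of_mem hvT
        omega
      have hrest := ih T' hcard' hT'm hT'pc
        (fun h => hsT (Finset.mem_of_mem_erase (Finset.mem_of_mem_erase h)))
        (fun h => htT (Finset.mem_of_mem_erase (Finset.mem_of_mem_erase h)))
      have ef1 : doubledWeight w s t s(Sum.inl v, mate hp (Sum.inl v)) = 0 := by
        rw [hconn']; exact dW_conn v ⟨v, hv'⟩ rfl
      have ef2 : doubledWeight w s t s(Sum.inr ⟨v, hv'⟩, mate hp (Sum.inr ⟨v, hv'⟩)) = 0 := by
        rw [hconnback]; exact dW_conn' v ⟨v, hv'⟩ rfl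
      have e1 := Finset.sum_erase_add T
        (fun x => doubledWeight w s t s(x, mate hp x)) hvT
      have e2 := Finset.sum_erase_add (T.erase (Sum.inl v))
        (fun x => doubledWeight w s t s(x, mate hp x)) hmem1
      rw [← hT'] at e2
      simp only [ef1] at e1
      simp only [ef2] at e2
      linarith

end Main

end PCPaux

open PCPaux

/-- Every perfect matching `M` of the doubled graph `H` yields an
`(F_even, F_odd)`-constrained odd `(s,t)`-path `Q` in `G` with `w(Q) ≤ w(M)`:
every edge of `Q` in `F_even` has even sequence number and every edge of `Q` in
`F_odd` has odd sequence number.  (The edge with index `i` has sequence number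
`i + 1`.) -/
theorem perfectMatching_yields_constrained_odd_path {V : Type*} [Fintype V]
    [DecidableEq V] (G : SimpleGraph V) (w : Sym2 V → ℝ) (hw : Conservative G w)
    (s t : V) (hst : s ≠ t) (Feven Fodd : Set (Sym2 V))
    (hdisj : Disjoint Feven Fodd)
    (hneg : ∀ e ∈ G.edgeSet, w e < 0 → e ∈ Feven ∪ Fodd)
    (M : Set (Sym2 (Vd V s t)))
    (hM : M ⊆ (doubledC G s t Feven Fodd).edgeSet)
    (hperfect : ∀ v : Vd V s t, ∃! e, e ∈ M ∧ v ∈ e) :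
    ∃ Q : G.Walk s t, Q.IsPath ∧ Odd Q.length ∧
      walkWeight G w Q ≤ ∑ᶠ e ∈ M, doubledWeight w s t e ∧
      ∀ i : Fin Q.edges.length,
        (Q.edges.get i ∈ Feven → Odd (i : ℕ)) ∧
        (Q.edges.get i ∈ Fodd → Even (i : ℕ)) := by
  set hp := hperfect with hhp
  -- the matching partner of s
  obtain ⟨v1, hmv1, hadj1, hFe1⟩ :
      ∃ v1, mate hp (Sum.inl s) = Sum.inl v1 ∧ G.Adj s v1 ∧ s(s, v1) ∉ Feven := by
    rcases mate_inl hp hM s with ⟨u, h1, h2, h3⟩ | ⟨hh, _⟩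
    · exact ⟨u, h1, h2, h3⟩
    · exact absurd rfl hh.1
  have hmv1back : mate hp (Sum.inl v1) = Sum.inl s := by
    have h0 := mate_mate hp hM (Sum.inl s)
    rwa [hmv1] at h0
  have hsv1 : s ≠ v1 := G.ne_of_adj hadj1
  -- construct the path
  obtain ⟨Q, hQpath, hQodd, hQpar, hQcl, hQsum⟩ :
      ∃ Q : G.Walk s t, Q.IsPath ∧ Odd Q.length ∧
        (∀ (i : ℕ) (hi : i < Q.edges.length),
          (Even i → Q.edges.get ⟨i, hi⟩ ∉ Feven) ∧ (Odd i → Q.edges.get ⟨i, hi⟩ ∉ Fodd)) ∧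
        (∀ x : Vd V s t, projd s t x ∈ Q.support → projd s t (mate hp x) ∈ Q.support) ∧
        ∑ x ∈ Finset.univ.filter (fun x : Vd V s t => projd s t x ∈ Q.support),
          doubledWeight w s t s(x, mate hp x) = 2 * walkWeight G w Q := by
    by_cases hv1t : v1 = t
    · -- the matching edge of s goes directly to t
      rw [hv1t] at hmv1 hadj1 hFe1 hmv1back hsv1
      refine ⟨SimpleGraph.Walk.cons hadj1 SimpleGraph.Walk.nil, ?_, ⟨0, rfl⟩, ?_, ?_, ?_⟩
      · simp [SimpleGraph.Walk.cons_isPath_iff, hst]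
      · intro i hi
        simp only [SimpleGraph.Walk.edges_cons, SimpleGraph.Walk.edges_nil,
          List.length_cons, List.length_nil] at hi
        match i, hi with
        | 0, _ =>
          exact ⟨fun _ => hFe1, fun h => absurd h (by simp [Nat.odd_iff])⟩
      · intro x hx
        simp only [SimpleGraph.Walk.support_cons, SimpleGraph.Walk.support_nil,
          List.mem_cons, List.not_mem_nil, or_false, List.mem_singleton] at hx ⊢
        rcases hx with h | h
        · rcases (proj_eq_iff x s).mp h with rfl | ⟨h1, hx2⟩
          · rw [hmv1]
            exact Or.inr rfl
          · exact absurd rfl h1.1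
        · rcases (proj_eq_iff x t).mp h with rfl | ⟨h1, hx2⟩
          · rw [hmv1back]
            exact Or.inl rfl
          · exact absurd rfl h1.2
      · rw [SimpleGraph.Walk.support_cons, SimpleGraph.Walk.support_nil]
        rw [filter_proj_cons_st s (by simp) _ (by simp [hst]),
          filter_proj_cons_st t (by simp) _ (by simp), filter_proj_nil,
          Finset.sum_empty, hmv1, hmv1back, dW_inl _ _ hst,
          dW_inl _ _ (Ne.symm hst), walkWeight_cons, walkWeight_nil]
        have hswap : w s(t, s) = w s(s, t) := congrArg w Sym2.eq_swap
        rw [hswap]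
        ring
    · -- use the main recursion
      have hv1s : v1 ≠ s := Ne.symm hsv1
      obtain ⟨W, hWpath, hWeven, hWdisj, hWpar, hWcl, hWsum⟩ :=
        go hp hM ((Finset.univ \ {s}).card) {s} v1 s le_rfl
          (Finset.mem_singleton_self s)
          (by simp [Ne.symm hst])
          (by simp [hv1s])
          hv1t
          (fun x hx => by
            rw [Finset.mem_singleton.mp hx]
            exact ⟨v1, hmv1, Or.inr rfl⟩)
          (fun u hu => absurd (Finset.mem_singleton.mp hu) u.2.1)
          (Finset.mem_singleton_self s) hmv1back
      have hsW : s ∉ W.support := fun h => hWdisj s h (Finset.mem_singleton_self s)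
      refine ⟨SimpleGraph.Walk.cons hadj1 W, ?_, ?_, ?_, ?_, ?_⟩
      · rw [SimpleGraph.Walk.cons_isPath_iff]
        exact ⟨hWpath, hsW⟩
      · rw [SimpleGraph.Walk.length_cons]
        obtain ⟨k, hk⟩ := hWeven
        exact ⟨k, by omega⟩
      · intro i hi
        rcases i with _ | j
        · exact ⟨fun _ => hFe1, fun h => absurd h (by simp [Nat.odd_iff])⟩
        · have hj : j < W.edges.length := by
            simp only [SimpleGraph.Walk.edges_cons, List.length_cons] at hi
            omega
          constructor
          · intro h
            have hodd : Odd j := by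
              rcases h with ⟨k, hk⟩
              exact ⟨k - 1, by omega⟩
            exact (hWpar j hj).2 hodd
          · intro h
            have heven : Even j := by
              rcases h with ⟨k, hk⟩
              exact ⟨k, by omega⟩
            exact (hWpar j hj).1 heven
      · intro x hx
        simp only [SimpleGraph.Walk.support_cons, List.mem_cons] at hx ⊢
        rcases hx with h | h
        · rcases (proj_eq_iff x s).mp h with rfl | ⟨h1, hx2⟩
          · rw [hmv1]
            exact Or.inr (SimpleGraph.Walk.start_mem_support W)
          · exact absurd rfl h1.1
        · by_cases hxv1 : x = Sum.inl v1
          · subst hxv1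
            rw [hmv1back]
            exact Or.inl rfl
          · exact Or.inr (hWcl x h hxv1)
      · rw [SimpleGraph.Walk.support_cons]
        rw [filter_proj_cons_st s (by simp) _ hsW, hWsum, hmv1, hmv1back,
          dW_inl _ _ hsv1, dW_inl _ _ (Ne.symm hsv1), walkWeight_cons]
        have hswap : w s(v1, s) = w s(s, v1) := congrArg w Sym2.eq_swap
        rw [hswap]
        ring
  -- residual part
  set T : Finset (Vd V s t) :=
    Finset.univ.filter (fun x : Vd V s t => ¬ projd s t x ∈ Q.support) with hT
  have hres : 0 ≤ ∑ x ∈ T, doubledWeight w s t s(x, mate hp x) := by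
    refine resid hp hM hw hneg T.card T le_rfl ?_ ?_ ?_ ?_
    · intro x hx
      rw [hT, Finset.mem_filter] at hx ⊢
      refine ⟨Finset.mem_univ _, ?_⟩
      intro hmem
      have := hQcl (mate hp x) hmem
      rw [mate_mate hp hM] at this
      exact hx.2 this
    · intro u hu
      rw [hT, Finset.mem_filter, Finset.mem_filter]
      simp [proj_inl, proj_inr]
    · rw [hT, Finset.mem_filter]
      simp [proj_inl, SimpleGraph.Walk.start_mem_support]
    · rw [hT, Finset.mem_filter]
      simp [proj_inl, SimpleGraph.Walk.end_mem_support]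
  -- the matching sum
  have hMfin : M.Finite := Set.toFinite M
  have hfin : ∑ᶠ e ∈ M, doubledWeight w s t e
      = ∑ e ∈ hMfin.toFinset, doubledWeight w s t e := by
    have h0 := finsum_mem_coe_finset (s := hMfin.toFinset)
      (f := fun e => doubledWeight w s t e)
    rwa [Set.Finite.coe_toFinset] at h0
  have hdouble : ∑ x : Vd V s t, doubledWeight w s t s(x, mate hp x)
      = ∑ e ∈ hMfin.toFinset, 2 * doubledWeight w s t e := by
    rw [← Finset.sum_fiberwise_of_maps_to
      (g := fun x : Vd V s t => s(x, mate hp x)) (t := hMfin.toFinset)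
      (fun x _ => hMfin.mem_toFinset.mpr (mate_mem hp x))
      (fun x => doubledWeight w s t s(x, mate hp x))]
    refine Finset.sum_congr rfl ?_
    intro e he
    revert he
    induction e using Sym2.ind with
    | _ u v =>
      intro he
      have hem : s(u, v) ∈ M := hMfin.mem_toFinset.mp he
      have hmuv : mate hp u = v := mate_eq hp hM hem
      have hmvu : mate hp v = u := mate_eq hp hM (by rw [Sym2.eq_swap]; exact hem)
      have huv : u ≠ v := by
        intro h
        exact (SimpleGraph.not_isDiag_of_mem_edgeSet _ (hM hem))
          (Sym2.mk_isDiag_iff.mpr h)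
      have hfilter : Finset.univ.filter
          (fun x : Vd V s t => s(x, mate hp x) = s(u, v)) = {u, v} := by
        ext x
        simp only [Finset.mem_filter, Finset.mem_univ, true_and, Finset.mem_insert,
          Finset.mem_singleton]
        constructor
        · intro h
          have hx := Sym2.mem_mk_left x (mate hp x)
          rw [h] at hx
          exact Sym2.mem_iff.mp hx
        · rintro (rfl | rfl)
          · rw [hmuv]
          · rw [hmvu]
            exact Sym2.eq_swap
      rw [hfilter, Finset.sum_insert (by simp [huv]), Finset.sum_singleton,
        hmuv, hmvu]
      have hswap : s(v, u) = s(u, v) := Sym2.eq_swap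
      rw [hswap]
      ring
  have hsplit := Finset.sum_filter_add_sum_filter_not Finset.univ
    (fun x : Vd V s t => projd s t x ∈ Q.support)
    (fun x : Vd V s t => doubledWeight w s t s(x, mate hp x))
  refine ⟨Q, hQpath, hQodd, ?_, ?_⟩
  · rw [hfin]
    have h2 : ∑ e ∈ hMfin.toFinset, 2 * doubledWeight w s t e
        = 2 * ∑ e ∈ hMfin.toFinset, doubledWeight w s t e := by
      rw [Finset.mul_sum]
    rw [← hT] at hsplit
    rw [hQsum] at hsplit
    have := hdouble
    linarith
  · intro i
    rcases Nat.even_or_odd (i : ℕ) with he | ho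
    · refine ⟨fun hmem => absurd hmem ((hQpar i i.2).1 he), fun _ => he⟩
    · refine ⟨fun _ => ho, fun hmem => absurd hmem ((hQpar i i.2).2 ho)⟩
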